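/- (Reduction to Sparse Case.) Let Φ be an m×d real matrix with restricted isometry constant δ_s ≤ 0.1. Let x ∈ ℝ^d be an arbitrary vector and e ∈ ℝ^m. Then the sample vector u = Φx + e can be expressed as u = Φx_s + ẽ, where ẽ = Φ(x − x_s) + e satisfies ‖ẽ‖₂ ≤ 1.05 (‖x − x_s‖₂ + ‖x − x_s‖₁/√s) + ‖e‖₂. -/

import Mathlib

/-!
Write `h = x - x_s`. Split `h` into blocks `T₀, T₁, …` of `s` coordinates each, in decreasing order
of magnitude. By the restricted isometry property `‖Φ h_{T_j}‖₂ ≤ √1.1 ‖h_{T_j}‖₂`, and since every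
entry of `h_{T_{j+1}}` is at most the mean of `|h|` over `T_j`, `‖h_{T_{j+1}}‖₂ ≤ ‖h_{T_j}‖₁ / √s`.
Summing over the blocks, `‖Φ h‖₂ ≤ √1.1 (‖h‖₂ + ‖h‖₁ / √s)`, and `√1.1 < 1.05`; the triangle
inequality then adds `‖e‖₂`.
-/

/-- The Euclidean (ℓ2) norm of a finitely-indexed real vector. -/
noncomputable def l2 {ι : Type*} [Fintype ι] (v : ι → ℝ) : ℝ :=
  Real.sqrt (∑ i, (v i) ^ 2)

/-- The ℓ1 norm of a finitely-indexed real vector. -/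
noncomputable def l1 {ι : Type*} [Fintype ι] (v : ι → ℝ) : ℝ :=
  ∑ i, |v i|

/-- A vector is `s`-sparse if it has at most `s` nonzero coordinates. -/
def Sparse {d : ℕ} (s : ℕ) (v : Fin d → ℝ) : Prop :=
  {i | v i ≠ 0}.ncard ≤ s

/-- The restriction of a vector to a set of coordinates (zero elsewhere). -/
def restr {d : ℕ} (S : Finset (Fin d)) (v : Fin d → ℝ) : Fin d → ℝ :=
  fun i => if i ∈ S then v i else 0

/-- `δ` satisfies the restricted isometry inequalities of `Φ` at sparsity level `r`
(quadratic form); `δ_r ≤ δ` is equivalent to this (for `δ ≥ 0`). -/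
def RICq {m d : ℕ} (Φ : Matrix (Fin m) (Fin d) ℝ) (r : ℕ) (δ : ℝ) : Prop :=
  ∀ v : Fin d → ℝ, Sparse r v →
    (1 - δ) * (l2 v) ^ 2 ≤ (l2 (Φ.mulVec v)) ^ 2 ∧
      (l2 (Φ.mulVec v)) ^ 2 ≤ (1 + δ) * (l2 v) ^ 2

open Finset Matrix

section Norms

variable {ι : Type*} [Fintype ι]

lemma l2_eq_norm_toLp (v : ι → ℝ) : l2 v = ‖WithLp.toLp 2 v‖ := by
  simp [l2, EuclideanSpace.norm_eq, sq_abs]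

lemma l2_nonneg (v : ι → ℝ) : 0 ≤ l2 v := Real.sqrt_nonneg _

lemma l1_nonneg (v : ι → ℝ) : 0 ≤ l1 v := sum_nonneg fun _ _ => abs_nonneg _

lemma sq_l2 (v : ι → ℝ) : l2 v ^ 2 = ∑ i, v i ^ 2 :=
  Real.sq_sqrt (sum_nonneg fun _ _ => sq_nonneg _)

lemma l2_add_le (v w : ι → ℝ) : l2 (v + w) ≤ l2 v + l2 w := by
  simpa only [l2_eq_norm_toLp, WithLp.toLp_add] using norm_add_le _ _

end Norms

lemma Finset.exists_subset_card_eq_forall_le {α β : Type*} [DecidableEq α] [LinearOrder β]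
    (f : α → β) {k : ℕ} {A : Finset α} (hk : k ≤ #A) :
    ∃ T ⊆ A, #T = k ∧ ∀ i ∈ T, ∀ j ∈ A \ T, f j ≤ f i := by
  induction k with
  | zero => exact ⟨∅, empty_subset _, rfl, by simp⟩
  | succ k ih =>
    obtain ⟨T, hTA, hTk, hTtop⟩ := ih (Nat.le_of_succ_le hk)
    have hne : (A \ T).Nonempty := by
      rw [← card_pos, card_sdiff_of_subset hTA]
      omega
    obtain ⟨a, ha, hamax⟩ := exists_max_image (A \ T) f hne
    obtain ⟨haA, haT⟩ := mem_sdiff.mp ha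
    refine ⟨insert a T, insert_subset haA hTA, by rw [card_insert_of_notMem haT, hTk], ?_⟩
    intro i hi j hj
    have hj' : j ∈ A \ T := by
      simp only [mem_sdiff, mem_insert, not_or] at hj ⊢
      exact ⟨hj.1, hj.2.2⟩
    rcases mem_insert.mp hi with rfl | hiT
    · exact hamax j hj'
    · exact hTtop i hiT j hj'

section Restr

variable {d : ℕ}

noncomputable def supportFinset (v : Fin d → ℝ) : Finset (Fin d) := {i | v i ≠ 0}

lemma mem_supportFinset {v : Fin d → ℝ} {i : Fin d} : i ∈ supportFinset v ↔ v i ≠ 0 := by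
  simp [supportFinset]

lemma restr_supportFinset (v : Fin d → ℝ) : restr (supportFinset v) v = v := by
  ext i
  by_cases hi : v i = 0 <;> simp [restr, mem_supportFinset, hi]

lemma sub_restr_apply (T : Finset (Fin d)) (v : Fin d → ℝ) (i : Fin d) :
    (v - restr T v) i = if i ∈ T then 0 else v i := by
  simp only [Pi.sub_apply, restr]
  split_ifs <;> ring

lemma supportFinset_sub_restr (T : Finset (Fin d)) (v : Fin d → ℝ) :
    supportFinset (v - restr T v) = supportFinset v \ T := by
  ext i
  rw [mem_sdiff, mem_supportFinset, mem_supportFinset, sub_restr_apply]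
  by_cases hi : i ∈ T <;> simp [hi]

lemma sparse_restr {s : ℕ} {T : Finset (Fin d)} (hT : #T ≤ s) (v : Fin d → ℝ) :
    Sparse s (restr T v) := by
  refine le_trans ?_ hT
  rw [← Set.ncard_coe_finset]
  refine Set.ncard_le_ncard (fun i hi => ?_) T.finite_toSet
  by_contra hiT
  exact hi (if_neg hiT)

lemma sq_l2_restr (T : Finset (Fin d)) (v : Fin d → ℝ) :
    l2 (restr T v) ^ 2 = ∑ i ∈ T, v i ^ 2 := by
  rw [sq_l2, ← sum_subset (subset_univ T) fun i _ hi => by simp [restr, hi]]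
  exact sum_congr rfl fun i hi => by simp [restr, hi]

lemma l2_restr_le (T : Finset (Fin d)) (v : Fin d → ℝ) : l2 (restr T v) ≤ l2 v := by
  refine Real.sqrt_le_sqrt (sum_le_sum fun i _ => ?_)
  by_cases hi : i ∈ T <;> simp [restr, hi, sq_nonneg]

lemma l1_restr (T : Finset (Fin d)) (v : Fin d → ℝ) : l1 (restr T v) = ∑ i ∈ T, |v i| := by
  rw [l1, ← sum_subset (subset_univ T) fun i _ hi => by simp [restr, hi]]
  exact sum_congr rfl fun i hi => by simp [restr, hi]

lemma l1_restr_add_l1_sub_restr (T : Finset (Fin d)) (v : Fin d → ℝ) :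
    l1 (restr T v) + l1 (v - restr T v) = l1 v := by
  rw [l1, l1, l1, ← sum_add_distrib]
  refine sum_congr rfl fun i _ => ?_
  by_cases hi : i ∈ T <;> simp [restr, hi]

lemma l2_restr_le_of_card_mul_abs_le {s : ℕ} {U : Finset (Fin d)} {v : Fin d → ℝ} {a : ℝ}
    (hU : #U ≤ s) (ha : 0 ≤ a) (hv : ∀ i ∈ U, s * |v i| ≤ a) :
    l2 (restr U v) ≤ a / √s := by
  rcases Nat.eq_zero_or_pos s with rfl | hs
  · simp [card_eq_zero.mp (Nat.le_zero.mp hU), restr, l2]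
  have hs' : (0 : ℝ) < s := Nat.cast_pos.mpr hs
  rw [← pow_le_pow_iff_left₀ (l2_nonneg _) (by positivity) two_ne_zero, sq_l2_restr, div_pow,
    Real.sq_sqrt hs'.le]
  calc ∑ i ∈ U, v i ^ 2 ≤ ∑ _i ∈ U, (a / s) ^ 2 := sum_le_sum fun i hi => by
        rw [← sq_abs]
        exact pow_le_pow_left₀ (abs_nonneg _) ((le_div_iff₀' hs').mpr (hv i hi)) 2
    _ = #U * (a / s) ^ 2 := by rw [sum_const, nsmul_eq_mul]
    _ ≤ s * (a / s) ^ 2 := by gcongr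
    _ = a ^ 2 / s := by field_simp

lemma card_mul_abs_sub_restr_le {T : Finset (Fin d)} {v : Fin d → ℝ}
    (htop : ∀ i ∈ T, ∀ j ∉ T, |v j| ≤ |v i|) (j : Fin d) :
    #T * |(v - restr T v) j| ≤ l1 (restr T v) := by
  rw [sub_restr_apply, l1_restr]
  by_cases hj : j ∈ T
  · simpa [hj] using sum_nonneg fun i _ => abs_nonneg (v i)
  · rw [if_neg hj, ← nsmul_eq_mul, ← sum_const]
    exact sum_le_sum fun i hi => htop i hi j hj

lemma exists_top_block (v : Fin d → ℝ) {k : ℕ} (hk : k ≤ #(supportFinset v)) :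
    ∃ T ⊆ supportFinset v, #T = k ∧ ∀ i ∈ T, ∀ j ∉ T, |v j| ≤ |v i| := by
  obtain ⟨T, hT, hTk, htop⟩ := exists_subset_card_eq_forall_le (fun i => |v i|) hk
  refine ⟨T, hT, hTk, fun i hi j hj => ?_⟩
  by_cases hvj : v j = 0
  · simp [hvj]
  · exact htop i hi j (mem_sdiff.mpr ⟨mem_supportFinset.mpr hvj, hj⟩)

end Restr

section RIP

variable {m d s : ℕ} {Φ : Matrix (Fin m) (Fin d) ℝ} {δ : ℝ}

lemma l2_mulVec_le_of_sparse (hΦ : RICq Φ s δ) {v : Fin d → ℝ} (hv : Sparse s v) :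
    l2 (Φ *ᵥ v) ≤ √(1 + δ) * l2 v := by
  rw [← Real.sqrt_sq (l2_nonneg (Φ *ᵥ v)), ← Real.sqrt_sq (l2_nonneg v),
    ← Real.sqrt_mul' _ (sq_nonneg _)]
  exact Real.sqrt_le_sqrt (hΦ v hv).2

/- Induction on the support: peel off the block `T` of the `s` largest entries of `h`. Every entry
of the rest is at most the mean of `|h|` over `T`, so `‖h_T‖₁ / √s` serves as `b` for the rest. -/
lemma l2_mulVec_le_of_forall_l2_restr_le (hs : 0 < s) (hΦ : RICq Φ s δ) (h : Fin d → ℝ) {b : ℝ}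
    (hb : ∀ T : Finset (Fin d), #T ≤ s → l2 (restr T h) ≤ b) :
    l2 (Φ *ᵥ h) ≤ √(1 + δ) * (b + l1 h / √s) := by
  have hl1 : 0 ≤ l1 h / √s := div_nonneg (l1_nonneg h) (Real.sqrt_nonneg _)
  induction hn : #(supportFinset h) using Nat.strong_induction_on generalizing h b with
  | _ n ih =>
  by_cases hsmall : n ≤ s
  · calc l2 (Φ *ᵥ h) = l2 (Φ *ᵥ restr (supportFinset h) h) := by rw [restr_supportFinset]
      _ ≤ √(1 + δ) * l2 (restr (supportFinset h) h) :=
        l2_mulVec_le_of_sparse hΦ (sparse_restr (hn ▸ hsmall) h)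
      _ ≤ √(1 + δ) * (b + l1 h / √s) := by
        gcongr
        linarith [hb _ (hn ▸ hsmall)]
  obtain ⟨T, hTsupp, hTs, htop⟩ := exists_top_block h (k := s) (by omega)
  set h' := h - restr T h
  have hb' (U : Finset (Fin d)) (hU : #U ≤ s) : l2 (restr U h') ≤ l1 (restr T h) / √s :=
    l2_restr_le_of_card_mul_abs_le hU (l1_nonneg _) fun i _ =>
      hTs ▸ card_mul_abs_sub_restr_le htop i
  have hcard : #(supportFinset h') < n := by
    rw [supportFinset_sub_restr, card_sdiff_of_subset hTsupp]
    omega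
  calc l2 (Φ *ᵥ h) = l2 (Φ *ᵥ restr T h + Φ *ᵥ h') := by rw [← mulVec_add, add_sub_cancel]
    _ ≤ l2 (Φ *ᵥ restr T h) + l2 (Φ *ᵥ h') := l2_add_le _ _
    _ ≤ √(1 + δ) * b + √(1 + δ) * (l1 (restr T h) / √s + l1 h' / √s) := by
      gcongr
      · exact (l2_mulVec_le_of_sparse hΦ (sparse_restr hTs.le h)).trans
          (mul_le_mul_of_nonneg_left (hb T hTs.le) (Real.sqrt_nonneg _))
      · exact ih _ hcard h' hb' (div_nonneg (l1_nonneg _) (Real.sqrt_nonneg _)) rfl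
    _ = √(1 + δ) * (b + l1 h / √s) := by
      rw [← l1_restr_add_l1_sub_restr T h]
      ring

lemma l2_mulVec_le (hs : 0 < s) (hΦ : RICq Φ s δ) (h : Fin d → ℝ) :
    l2 (Φ *ᵥ h) ≤ √(1 + δ) * (l2 h + l1 h / √s) :=
  l2_mulVec_le_of_forall_l2_restr_le hs hΦ h fun T _ => l2_restr_le T h

end RIP

theorem stmt12_general (m d s : ℕ) (hs : 0 < s)
    (Φ : Matrix (Fin m) (Fin d) ℝ) (hΦ : RICq Φ s (1 / 10))
    (x : Fin d → ℝ) (e : Fin m → ℝ)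
    (S : Finset (Fin d)) :
    Φ.mulVec x + e = Φ.mulVec (restr S x) + (Φ.mulVec (x - restr S x) + e) ∧
    l2 (Φ.mulVec (x - restr S x) + e) ≤
      1.05 * (l2 (x - restr S x) + l1 (x - restr S x) / Real.sqrt s) + l2 e := by
  refine ⟨by rw [mulVec_sub]; abel, ?_⟩
  set h := x - restr S x
  have hC : √(1 + 1 / 10) ≤ (1.05 : ℝ) := Real.sqrt_le_iff.mpr ⟨by norm_num, by norm_num⟩
  have hnorms : 0 ≤ l2 h + l1 h / √s :=
    add_nonneg (l2_nonneg h) (div_nonneg (l1_nonneg h) (Real.sqrt_nonneg _))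
  calc l2 (Φ *ᵥ h + e) ≤ l2 (Φ *ᵥ h) + l2 e := l2_add_le _ _
    _ ≤ √(1 + 1 / 10) * (l2 h + l1 h / √s) + l2 e := by gcongr; exact l2_mulVec_le hs hΦ h
    _ ≤ 1.05 * (l2 h + l1 h / √s) + l2 e := by gcongr

/-- **Reduction to Sparse Case.** Suppose `δ_s ≤ 0.1`. For arbitrary
`x ∈ ℝ^d` and `e ∈ ℝ^m`, with `x_s = restr S x` a best `s`-sparse approximation of `x`,
the samples `u = Φx + e` can be written `u = Φx_s + ẽ` with
`ẽ = Φ(x − x_s) + e` satisfying `‖ẽ‖₂ ≤ 1.05 (‖x − x_s‖₂ + ‖x − x_s‖₁/√s) + ‖e‖₂`. -/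
theorem stmt12 (m d s : ℕ) (hs : 0 < s)
    (Φ : Matrix (Fin m) (Fin d) ℝ) (hΦ : RICq Φ s (1 / 10))
    (x : Fin d → ℝ) (e : Fin m → ℝ)
    (S : Finset (Fin d)) (hcard : S.card = s)
    (hbig : ∀ i ∈ S, ∀ j ∉ S, |x j| ≤ |x i|) :
    Φ.mulVec x + e = Φ.mulVec (restr S x) + (Φ.mulVec (x - restr S x) + e) ∧
    l2 (Φ.mulVec (x - restr S x) + e) ≤
      1.05 * (l2 (x - restr S x) + l1 (x - restr S x) / Real.sqrt s) + l2 e :=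
  stmt12_general m d s hs Φ hΦ x e S
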